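/- arXiv:2309.15524 — 3 statements merged into one kernel-verified Lean document; each statement's English description precedes it below -/
import Mathlib

section
/- A map φ: S₁ → S₂ between the vertex sets of two weighted complete directed graphs P₁ = (S₁, C₁) and P₂ = (S₂, C₂) intertwines the generators (i.e., L^{P₁}(f∘φ) = (L^{P₂}f)∘φ for all f: S₂ → ℝ) if and only if for every x ∈ S₁ and y ∈ S₂ with φ(x) ≠ y, one has C₂(φ(x), y) = Σ_{y' ∈ φ⁻¹(y)} C₁(x, y'). -/
open scoped Classical
open Finset

noncomputable section

/-- The generator of a weighted complete directed graph `P = (S, C)`: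
`L^P f (x) = ∑ y, C x y * (f y - f x)`. -/
def gen {S : Type*} [Fintype S] (C : S → S → ℝ) (f : S → ℝ) (x : S) : ℝ :=
  ∑ y, C x y * (f y - f x)

/-- Minus the generator, as a linear endomorphism of `S → ℝ`. -/
def negGen {S : Type*} [Fintype S] (C : S → S → ℝ) : Module.End ℝ (S → ℝ) where
  toFun f := fun x => -∑ y, C x y * (f y - f x)
  map_add' f g := by
    funext x
    simp only [Pi.add_apply]
    rw [← neg_add, ← Finset.sum_add_distrib]
    congr 1
    exact Finset.sum_congr rfl fun y _ => by ring
  map_smul' c f := by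
    funext x
    simp only [Pi.smul_apply, smul_eq_mul, RingHom.id_apply]
    rw [mul_neg, Finset.mul_sum]
    congr 1
    exact Finset.sum_congr rfl fun y _ => by ring

/-- The spectral gap: the smallest nonzero eigenvalue of `-L^P`
(the second smallest eigenvalue, since `0` is always an eigenvalue). -/
def spectralGap {S : Type*} [Fintype S] (C : S → S → ℝ) : ℝ :=
  sInf {lam : ℝ | lam ≠ 0 ∧ Module.End.HasEigenvalue (negGen C) lam}

/-- Irreducibility: any two vertices are joined by a path of nonzero-weight edges. -/
def GraphIrreducible {S : Type*} (C : S → S → ℝ) : Prop :=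
  ∀ x y : S, Relation.ReflTransGen (fun a b => C a b ≠ 0) x y

/-- Reversibility with respect to `μ`. -/
def GraphReversible {S : Type*} (C : S → S → ℝ) (μ : S → ℝ) : Prop :=
  ∀ x y : S, C y x * μ x = C x y * μ y

/-- `φ` is a morphism of weighted complete directed graphs:
it intertwines the generators. -/
def IsMorphism {S₁ S₂ : Type*} [Fintype S₁] [Fintype S₂]
    (C₁ : S₁ → S₁ → ℝ) (C₂ : S₂ → S₂ → ℝ) (φ : S₁ → S₂) : Prop :=
  ∀ (f : S₂ → ℝ) (x : S₁), gen C₁ (f ∘ φ) x = gen C₂ f (φ x)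

/-- The weight-sum characterization of morphisms of weighted complete directed graphs:
`C₂ (φ x) y = ∑ (y' ∈ φ⁻¹ y), C₁ x y'` whenever `φ x ≠ y`. -/
def IsMorphismW {S₁ S₂ : Type*} [Fintype S₁]
    (C₁ : S₁ → S₁ → ℝ) (C₂ : S₂ → S₂ → ℝ) (φ : S₁ → S₂) : Prop :=
  ∀ (x : S₁) (y : S₂), φ x ≠ y →
    C₂ (φ x) y = ∑ y' ∈ Finset.univ.filter (fun y' => φ y' = y), C₁ x y'

theorem stmt_0 {S₁ S₂ : Type*} [Fintype S₁] [Fintype S₂]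
    (C₁ : S₁ → S₁ → ℝ) (C₂ : S₂ → S₂ → ℝ)
    (hC₁ : ∀ x y, 0 ≤ C₁ x y) (hC₁d : ∀ x, C₁ x x = 0)
    (hC₂ : ∀ x y, 0 ≤ C₂ x y) (hC₂d : ∀ x, C₂ x x = 0)
    (φ : S₁ → S₂) :
    IsMorphism C₁ C₂ φ ↔ IsMorphismW C₁ C₂ φ := by
  constructor
  · intro h x y hne
    have hfx := h (fun z => if z = y then (1 : ℝ) else 0) x
    simp only [gen, Function.comp] at hfx
    have h1 : ∑ y', C₁ x y' * ((if φ y' = y then (1:ℝ) else 0) - 0)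
        = ∑ y' ∈ Finset.univ.filter (fun y' => φ y' = y), C₁ x y' := by
      rw [Finset.sum_filter]
      refine Finset.sum_congr rfl fun y' _ => ?_
      by_cases hy : φ y' = y <;> simp [hy]
    have h2 : ∑ z, C₂ (φ x) z * ((if z = y then (1:ℝ) else 0) - 0) = C₂ (φ x) y := by
      rw [Finset.sum_eq_single y]
      · simp
      · intro b _ hb; simp [hb]
      · simp
    rw [if_neg hne] at hfx
    rw [h1, h2] at hfx
    exact hfx.symm
  · intro h f x
    unfold gen
    rw [← Finset.sum_fiberwise (g := φ) (f := fun y' => C₁ x y' * ((f ∘ φ) y' - (f ∘ φ) x))]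
    refine Finset.sum_congr rfl fun y _ => ?_
    by_cases hy : φ x = y
    · subst hy
      rw [hC₂d, zero_mul]
      refine Finset.sum_eq_zero fun y' hy' => ?_
      simp only [Finset.mem_filter] at hy'
      simp [Function.comp, hy'.2]
    · rw [h x y hy, Finset.sum_mul]
      refine Finset.sum_congr rfl fun y' hy' => ?_
      simp only [Finset.mem_filter] at hy'
      simp [Function.comp, hy'.2]
end
end

section
/- Let G be a weighted group with regular pairs (H₁, H₁') and (H₂, H₂') of subgroups such that H₁ ⊆ H₂ and H₁' ⊆ H₂'. Then the natural map H₁\G/H₁' → H₂\G/H₂' on double cosets is a morphism of the quotient weighted complete directed graphs P̄₁ = H₁\P̂(G)/H₁' → P̄₂ = H₂\P̂(G)/H₂'. -/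
open scoped Classical
open Finset

noncomputable section

/-- A weighted group `(G, C)` is irreducible. -/
def GroupIrreducible {G : Type*} [Group G] (C : G → ℝ) : Prop :=
  ∀ x y : G, Relation.ReflTransGen (fun a b => C (b * a⁻¹) ≠ 0) x y

/-- A weighted group `(G, C)` is reversible with respect to `μ`. -/
def GroupReversible {G : Type*} [Group G] (C : G → ℝ) (μ : G → ℝ) : Prop :=
  ∀ g h : G, C h * μ g = C h⁻¹ * μ (h * g)

/-- The weight of the Cayley-type graph `P̂(G)` : `Ĉ(x, y) = C_G (y * x⁻¹)`. -/
def hatC {G : Type*} [Group G] (C : G → ℝ) : G → G → ℝ := fun x y => C (y * x⁻¹)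

/-- `dRel H H' x y` iff `y ∈ H * x * H'`. -/
def dRel {G : Type*} [Group G] (H H' : Subgroup G) (x y : G) : Prop :=
  ∃ h ∈ H, ∃ h' ∈ H', y = h * x * h'

theorem dRel_equivalence {G : Type*} [Group G] (H H' : Subgroup G) :
    Equivalence (dRel H H') where
  refl x := ⟨1, H.one_mem, 1, H'.one_mem, by simp⟩
  symm := by
    rintro x y ⟨h, hh, h', hh', rfl⟩
    exact ⟨h⁻¹, H.inv_mem hh, h'⁻¹, H'.inv_mem hh', by simp [mul_assoc]⟩
  trans := by
    rintro x y z ⟨h, hh, h', hh', rfl⟩ ⟨g, hg, g', hg', rfl⟩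
    exact ⟨g * h, H.mul_mem hg hh, h' * g', H'.mul_mem hh' hg', by simp [mul_assoc]⟩

/-- The setoid of double cosets `H\G/H'`. -/
def dSetoid {G : Type*} [Group G] (H H' : Subgroup G) : Setoid G :=
  ⟨dRel H H', dRel_equivalence H H'⟩

/-- The set of double cosets `H\G/H'`. -/
abbrev DQuot {G : Type*} [Group G] (H H' : Subgroup G) : Type _ := Quotient (dSetoid H H')

/-- The double coset `HxH'` as an element of `H\G/H'`. -/
def dmk {G : Type*} [Group G] (H H' : Subgroup G) (x : G) : DQuot H H' :=
  Quotient.mk (dSetoid H H') x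

noncomputable instance {G : Type*} [Group G] [Fintype G] (H H' : Subgroup G) :
    Fintype (DQuot H H') :=
  @Quotient.fintype _ _ (dSetoid H H') (Classical.decRel _)

/-- The double coset `HyH'` as a finset. -/
def dFinset {G : Type*} [Group G] [Fintype G] (H H' : Subgroup G) (y : G) : Finset G :=
  Finset.univ.filter (fun z => dRel H H' y z)

/-- The pair of subgroups `(H, H')` is regular for the weight `C`. -/
def IsRegularPair {G : Type*} [Group G] [Fintype G] (C : G → ℝ) (H H' : Subgroup G) : Prop :=
  ∀ x y : G, dFinset H H' x ≠ dFinset H H' y → ∀ h ∈ H,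
    ∑ y' ∈ dFinset H H' y, C (y' * x⁻¹) = ∑ y' ∈ dFinset H H' y, C (y' * x⁻¹ * h⁻¹)

/-- The weight of the quotient graph `H\P̂(G)/H'` :
`C̄([x], [y]) = ∑ (y' ∈ HyH'), C_G (y' * x⁻¹)` for `[x] ≠ [y]`, and `0` on the diagonal. -/
def qC {G : Type*} [Group G] [Fintype G] (C : G → ℝ) (H H' : Subgroup G) :
    DQuot H H' → DQuot H H' → ℝ :=
  fun q q' => if q = q' then 0
    else ∑ z ∈ Finset.univ.filter (fun z => dmk H H' z = q'), C (z * (Quotient.out q)⁻¹)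

lemma dmk_eq_iff {G : Type*} [Group G] (H H' : Subgroup G) (x y : G) :
    dmk H H' x = dmk H H' y ↔ dRel H H' x y :=
  ⟨fun h => Quotient.exact h, fun h => Quotient.sound h⟩

lemma filter_dmk_eq_dFinset {G : Type*} [Group G] [Fintype G] (H H' : Subgroup G)
    (q : DQuot H H') :
    Finset.univ.filter (fun z => dmk H H' z = q) = dFinset H H' q.out := by
  ext z
  simp only [dFinset, Finset.mem_filter, Finset.mem_univ, true_and]
  constructor
  · intro h
    exact (dRel_equivalence H H').symm
      (Quotient.exact (h.trans (Quotient.out_eq q).symm))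
  · intro hz
    exact (Quotient.sound ((dRel_equivalence H H').symm hz) :
      dmk H H' z = dmk H H' q.out).trans (Quotient.out_eq q)

lemma dFinset_eq_of_dmk_eq {G : Type*} [Group G] [Fintype G] (H H' : Subgroup G)
    {x y : G} (h : dmk H H' x = dmk H H' y) : dFinset H H' x = dFinset H H' y := by
  rw [dmk_eq_iff] at h
  ext z
  simp only [dFinset, Finset.mem_filter, Finset.mem_univ, true_and]
  constructor
  · intro hz
    exact (dRel_equivalence H H').trans ((dRel_equivalence H H').symm h) hz
  · intro hz
    exact (dRel_equivalence H H').trans h hz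

theorem stmt_11 {G : Type*} [Group G] [Fintype G] (C : G → ℝ)
    (hC : ∀ g, 0 ≤ C g) (hC1 : C 1 = 0)
    (H₁ H₁' H₂ H₂' : Subgroup G)
    (hreg₁ : IsRegularPair C H₁ H₁') (hreg₂ : IsRegularPair C H₂ H₂')
    (h12 : H₁ ≤ H₂) (h12' : H₁' ≤ H₂') :
    ∃ φ : DQuot H₁ H₁' → DQuot H₂ H₂',
      (∀ x : G, φ (dmk H₁ H₁' x) = dmk H₂ H₂' x) ∧
      IsMorphismW (qC C H₁ H₁') (qC C H₂ H₂') φ := by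
  classical
  have hresp : ∀ a b : G, dRel H₁ H₁' a b → dmk H₂ H₂' a = dmk H₂ H₂' b := by
    rintro a b ⟨h, hh, h', hh', rfl⟩
    exact Quotient.sound ⟨h, h12 hh, h', h12' hh', rfl⟩
  set φ : DQuot H₁ H₁' → DQuot H₂ H₂' :=
    Quotient.lift (dmk H₂ H₂') hresp with hφ
  have hφmk : ∀ x : G, φ (dmk H₁ H₁' x) = dmk H₂ H₂' x := fun x => rfl
  refine ⟨φ, hφmk, ?_⟩
  intro x y hxy
  set a := Quotient.out x with ha
  have hxa : x = dmk H₁ H₁' a := (Quotient.out_eq x).symm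
  have hφx : φ x = dmk H₂ H₂' a := by rw [hxa, hφmk]
  -- the big double coset of y as a finset
  set T : Finset G := Finset.univ.filter (fun z => dmk H₂ H₂' z = y) with hT
  set c := Quotient.out (φ x) with hc
  -- c and a lie in the same H₂-double coset
  have hca : dRel H₂ H₂' a c := by
    rw [← dmk_eq_iff H₂ H₂', ← hφx]
    exact (Quotient.out_eq (φ x)).symm
  obtain ⟨h, hh, h', hh', hceq⟩ := hca
  -- LHS computation
  have hLHS : qC C H₂ H₂' (φ x) y = ∑ z ∈ T, C (z * c⁻¹) := by
    rw [qC, if_neg hxy]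
  -- translation invariance: z ↦ z * h'⁻¹ preserves T
  have hTmul : ∀ (z k : G), k ∈ H₂' → z ∈ T → z * k ∈ T := by
    intro z k hk hz
    simp only [hT, Finset.mem_filter, Finset.mem_univ, true_and] at hz ⊢
    rw [show dmk H₂ H₂' (z * k) = dmk H₂ H₂' z from
      (dmk_eq_iff _ _ _ _).mpr
        ((dRel_equivalence H₂ H₂').symm ⟨1, H₂.one_mem, k, hk, by group⟩)]
    exact hz
  have step2 : ∑ z ∈ T, C (z * c⁻¹) = ∑ w ∈ T, C (w * a⁻¹ * h⁻¹) := by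
    refine Finset.sum_nbij' (fun z => z * h'⁻¹) (fun w => w * h') ?_ ?_ ?_ ?_ ?_
    · intro z hz; exact hTmul z h'⁻¹ (H₂'.inv_mem hh') hz
    · intro w hw; exact hTmul w h' hh' hw
    · intro z _; group
    · intro w _; group
    · intro z _
      congr 1
      rw [hceq]; group
  -- regularity of (H₂, H₂')
  have hTb : T = dFinset H₂ H₂' (Quotient.out y) := by
    rw [hT, filter_dmk_eq_dFinset]
  have hne : dFinset H₂ H₂' a ≠ dFinset H₂ H₂' (Quotient.out y) := by
    intro hcon
    apply hxy
    rw [hφx]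
    have : dmk H₂ H₂' a = dmk H₂ H₂' (Quotient.out y) := by
      by_contra hcon2
      exact hcon2 (by
        have hmem : a ∈ dFinset H₂ H₂' a := by
          simp [dFinset, (dRel_equivalence H₂ H₂').refl a]
        rw [hcon] at hmem
        simp only [dFinset, Finset.mem_filter, Finset.mem_univ, true_and] at hmem
        rw [dmk_eq_iff]
        exact (dRel_equivalence H₂ H₂').symm hmem)
    rw [this]
    exact Quotient.out_eq y
  have step3 : ∑ w ∈ T, C (w * a⁻¹ * h⁻¹) = ∑ w ∈ T, C (w * a⁻¹) := by
    rw [hTb]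
    exact (hreg₂ a (Quotient.out y) hne h hh).symm
  -- fiberwise decomposition
  have step4 : ∑ w ∈ T, C (w * a⁻¹) =
      ∑ y' ∈ Finset.univ.filter (fun y' => φ y' = y),
        ∑ z ∈ Finset.univ.filter (fun z => dmk H₁ H₁' z = y'), C (z * a⁻¹) := by
    rw [← Finset.sum_fiberwise_of_maps_to (g := dmk H₁ H₁')
      (t := Finset.univ.filter (fun y' => φ y' = y)) ?_ (fun w => C (w * a⁻¹))]
    · refine Finset.sum_congr (by congr) ?_
      intro y' hy'
      simp only [Finset.mem_filter, Finset.mem_univ, true_and] at hy'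
      refine Finset.sum_congr ?_ (fun _ _ => rfl)
      ext z
      simp only [hT, Finset.mem_filter, Finset.mem_univ, true_and]
      constructor
      · rintro ⟨_, hz2⟩; exact hz2
      · intro hz
        refine ⟨?_, hz⟩
        rw [← hy', ← hz, hφmk]
    · intro z hz
      simp only [hT, Finset.mem_filter, Finset.mem_univ, true_and] at hz ⊢
      rw [hφmk]
      exact hz
  rw [hLHS, step2, step3, step4]
  refine Finset.sum_congr (by congr) ?_
  intro y' hy'
  simp only [Finset.mem_filter, Finset.mem_univ, true_and] at hy'
  have hxy' : x ≠ y' := by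
    intro hcon; rw [hcon, hy'] at hxy; exact hxy rfl
  rw [qC, if_neg hxy', ← ha]
end
end

section
/- Let X = (V, r) be a symmetric weighted complete directed graph on n vertices, and let P_{kRW} be the random walk on (V, k·r), i.e., the weighted graph with weights C_{kRW}(u, w) = k·r(u, w). Let G = S_N (N = kn) be the weighted group of the interchange process on the extended graph X̃ obtained by replacing each vertex v by k copies, with weights as in the extended-graph construction. Then the double quotient (∏_v H^v)\P̂(G)/H_{N−1}, where H^v is the subgroup permuting the k copies of v and H_{N−1} permutes {1,…,N−1}, is isomorphic as a weighted complete directed graph to P_{kRW}. In particular, its spectral gap equals k times the spectral gap of the random walk on X. -/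
open scoped Classical
open Finset

noncomputable section

/-- The weight of the extended graph `X̃`: vertices are `V × Fin k` (each vertex of `V`
is replaced by `k` copies); copies of distinct vertices keep the weight `r`, distinct
copies of the same vertex are joined with weight `∑ (v' ≠ v), r v v'`. -/
def extWeight {V : Type*} [Fintype V] (k : ℕ) (r : V → V → ℝ) :
    V × Fin k → V × Fin k → ℝ :=
  fun a b =>
    if a = b then 0
    else if a.1 = b.1 then ∑ v ∈ Finset.univ.filter (fun v => v ≠ a.1), r a.1 v
    else r a.1 b.1

/-- The subgroup `∏_v H^v` of permutations preserving each block of copies,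
i.e. preserving the `V`-component through the labeling `ξ`. -/
def Hleft {V : Type*} [Fintype V] {k N : ℕ} (ξ : Fin N ≃ V × Fin k) :
    Subgroup (Equiv.Perm (Fin N)) where
  carrier := {g | ∀ a : Fin N, (ξ (g a)).1 = (ξ a).1}
  one_mem' := by intro a; simp
  mul_mem' := by
    intro g h hg hh a
    simpa [Equiv.Perm.mul_apply] using (hg (h a)).trans (hh a)
  inv_mem' := by
    intro g hg a
    have h := hg (g⁻¹ a)
    rw [← Equiv.Perm.mul_apply, mul_inv_cancel, Equiv.Perm.one_apply] at h
    exact h.symm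

/-!
Since `H_e` fixes `e` and `∏_v H^v` preserves the blocks `ξ⁻¹ ({v} × Fin k)`, the double coset
of `g` is determined by the block of `g e`, and this identifies the double cosets with `V`.
Because `CG` lives on transpositions, the weight from the coset of `x` to a coset labelled by
another block `w` only sees the permutations `swap (x e) b * x` with `b` one of the `k` points of
block `w`, each of weight `r`; so the quotient carries the weights `k * r`. Relabelling the
vertices and scaling the weights by `c > 0` scales every eigenvalue of `-L`, hence the spectral
gap, by `c`.
-/

namespace Equiv.Perm

variable {α : Type*} [Fintype α] [DecidableEq α]

theorem sum_filter_apply_eq_sum_swap (C : Perm α → ℝ) (hC : ∀ g : Perm α, ¬g.IsSwap → C g = 0)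
    (p : α → Prop) (a : α) (ha : ¬p a) :
    ∑ g ∈ univ.filter (fun g : Perm α => p (g a)), C g = ∑ b ∈ univ.filter p, C (swap a b) := by
  have hinj : Set.InjOn (swap a) (univ.filter p : Finset α) := fun b _ b' _ h => by
    simpa using DFunLike.congr_fun h a
  rw [← sum_image hinj]
  refine (sum_subset ?_ fun g hg hgim => ?_).symm
  · intro g hg
    obtain ⟨b, hb, rfl⟩ := mem_image.mp hg
    simpa using hb
  · refine hC g fun ⟨i, j, _, hsw⟩ => hgim (mem_image.mpr ⟨g a, by simpa using hg, ?_⟩)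
    have hga : g a ≠ a := fun h => ha (h ▸ (mem_filter.mp hg).2)
    subst hsw
    rcases (swap_apply_ne_self_iff.mp hga).2 with rfl | rfl
    · rw [swap_apply_left]
    · rw [swap_apply_right, swap_comm]

theorem sum_filter_apply_mul_inv_eq_sum_swap (C : Perm α → ℝ)
    (hC : ∀ g : Perm α, ¬g.IsSwap → C g = 0) (p : α → Prop) (x : Perm α) (e : α) (he : ¬p (x e)) :
    ∑ z ∈ univ.filter (fun z : Perm α => p (z e)), C (z * x⁻¹) =
      ∑ b ∈ univ.filter p, C (swap (x e) b) := by
  rw [← sum_filter_apply_eq_sum_swap C hC p (x e) he, sum_filter, sum_filter]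
  exact Fintype.sum_equiv (Equiv.mulRight x⁻¹) _ _ fun z => by simp

end Equiv.Perm

section SpectralGap

open scoped Pointwise

variable {S T : Type*} [Fintype S] [Fintype T]

theorem negGen_comp_equiv (C : S → S → ℝ) (φ : T ≃ S) (c : ℝ) :
    negGen (fun x y => c * C (φ x) (φ y)) =
      LinearEquiv.conjAlgEquiv ℝ (LinearEquiv.funCongrLeft ℝ ℝ φ) (c • negGen C) := by
  refine LinearMap.ext fun f => funext fun x => ?_
  simp only [negGen, LinearMap.coe_mk, AddHom.coe_mk, map_smul, LinearMap.smul_apply,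
    LinearEquiv.conjAlgEquiv_apply_apply, LinearEquiv.funCongrLeft_symm,
    LinearEquiv.funCongrLeft_apply, LinearMap.funLeft_apply, Pi.smul_apply,
    Equiv.symm_apply_apply, smul_eq_mul, mul_neg, mul_sum, neg_inj]
  exact Fintype.sum_equiv φ _ _ fun y => by simp [mul_assoc]

theorem hasEigenvalue_negGen_comp_equiv_iff (C : S → S → ℝ) (φ : T ≃ S) {c : ℝ} (hc : c ≠ 0)
    (μ : ℝ) :
    (negGen fun x y => c * C (φ x) (φ y)).HasEigenvalue (c * μ) ↔ (negGen C).HasEigenvalue μ := by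
  rw [Module.End.hasEigenvalue_iff_mem_spectrum, Module.End.hasEigenvalue_iff_mem_spectrum,
    negGen_comp_equiv, AlgEquiv.spectrum_eq, ← Units.val_mk0 hc]
  exact spectrum.smul_mem_smul_iff

theorem spectralGap_comp_equiv (C : S → S → ℝ) (φ : T ≃ S) {c : ℝ} (hc : 0 < c) :
    spectralGap (fun x y => c * C (φ x) (φ y)) = c * spectralGap C := by
  have hset : {μ : ℝ | μ ≠ 0 ∧ (negGen fun x y => c * C (φ x) (φ y)).HasEigenvalue μ} =
      c • {μ : ℝ | μ ≠ 0 ∧ (negGen C).HasEigenvalue μ} := by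
    ext μ
    rw [Set.mem_smul_set_iff_inv_smul_mem₀ hc.ne', Set.mem_ofPred, Set.mem_ofPred, smul_eq_mul,
      ← hasEigenvalue_negGen_comp_equiv_iff C φ hc.ne', mul_inv_cancel_left₀ hc.ne']
    simp [hc.ne']
  rw [spectralGap, spectralGap, hset, Real.sInf_smul_of_nonneg hc.le, smul_eq_mul]

end SpectralGap

section DoubleCoset

variable {V : Type*} {k N : ℕ} (ξ : Fin N ≃ V × Fin k)

theorem card_filter_fst_eq (v : V) : (univ.filter fun b : Fin N => (ξ b).1 = v).card = k := by
  have hinj : Function.Injective fun i : Fin k => ξ.symm (v, i) := fun i j h => by simpa using h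
  have himage : univ.filter (fun b : Fin N => (ξ b).1 = v) = univ.image fun i => ξ.symm (v, i) := by
    ext b
    simp [Equiv.eq_symm_apply, Prod.ext_iff, eq_comm]
  rw [himage, card_image_of_injective _ hinj, card_univ, Fintype.card_fin]

variable [Fintype V] (e : Fin N)

local notation "H_e" => MulAction.stabilizer (Equiv.Perm (Fin N)) e

theorem dRel_Hleft_stabilizer_iff (g g' : Equiv.Perm (Fin N)) :
    dRel (Hleft ξ) H_e g g' ↔ (ξ (g e)).1 = (ξ (g' e)).1 := by
  constructor
  · rintro ⟨h, hh, h', hh', rfl⟩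
    have he' : h' e = e := hh'
    simpa [he'] using (hh (g e)).symm
  · intro hblk
    -- the transposition of `g e` and `g' e` stays in its block and moves `g e` to `g' e`
    set τ := Equiv.swap (g e) (g' e)
    refine ⟨τ, fun a => ?_, (τ * g)⁻¹ * g', ?_, by group⟩
    · rcases eq_or_ne a (g e) with rfl | h1
      · rw [Equiv.swap_apply_left]; exact hblk.symm
      rcases eq_or_ne a (g' e) with rfl | h2
      · rw [Equiv.swap_apply_right]; exact hblk
      · rw [Equiv.swap_apply_of_ne_of_ne h1 h2]
    · show ((τ * g)⁻¹ * g') e = e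
      rw [Equiv.Perm.mul_apply, Equiv.Perm.inv_eq_iff_eq]
      simp [τ]

def blockOfDoubleCoset : DQuot (Hleft ξ) H_e → V :=
  Quotient.lift (fun g => (ξ (g e)).1) fun g g' => (dRel_Hleft_stabilizer_iff ξ e g g').mp

theorem dmk_Hleft_stabilizer_eq_iff (g : Equiv.Perm (Fin N)) (q : DQuot (Hleft ξ) H_e) :
    dmk (Hleft ξ) H_e g = q ↔ (ξ (g e)).1 = blockOfDoubleCoset ξ e q := by
  induction q using Quotient.inductionOn with
  | h g' => exact Quotient.eq.trans (dRel_Hleft_stabilizer_iff ξ e g g')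

theorem blockOfDoubleCoset_bijective : Function.Bijective (blockOfDoubleCoset ξ e) := by
  refine ⟨fun q q' => ?_, fun v => ⟨dmk _ _ (Equiv.swap e (ξ.symm (v, (ξ e).2))), ?_⟩⟩
  · induction q using Quotient.inductionOn
    exact fun h => (dmk_Hleft_stabilizer_eq_iff ξ e _ q').mpr h
  · show (ξ (Equiv.swap e (ξ.symm (v, (ξ e).2)) e)).1 = v
    simp

theorem qC_Hleft_stabilizer_eq (r : V → V → ℝ) (hrd : ∀ u, r u u = 0)
    (CG : Equiv.Perm (Fin N) → ℝ)
    (hCG1 : ∀ i j : Fin N, i ≠ j → CG (Equiv.swap i j) = extWeight k r (ξ i) (ξ j))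
    (hCG0 : ∀ g : Equiv.Perm (Fin N), ¬g.IsSwap → CG g = 0) (q q' : DQuot (Hleft ξ) H_e) :
    qC CG (Hleft ξ) H_e q q' =
      k * r (blockOfDoubleCoset ξ e q) (blockOfDoubleCoset ξ e q') := by
  rcases eq_or_ne q q' with rfl | hne
  · simp [qC, hrd]
  rw [qC, if_neg hne]
  set x := q.out
  set w := blockOfDoubleCoset ξ e q'
  have hx : (ξ (x e)).1 = blockOfDoubleCoset ξ e q :=
    (dmk_Hleft_stabilizer_eq_iff ξ e x q).mp q.out_eq
  have hxw : (ξ (x e)).1 ≠ w := hx ▸ (blockOfDoubleCoset_bijective ξ e).1.ne hne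
  have hterm : ∀ b ∈ univ.filter fun b => (ξ b).1 = w,
      CG (Equiv.swap (x e) b) = r (blockOfDoubleCoset ξ e q) w := by
    intro b hb
    have hb : (ξ b).1 = w := (mem_filter.mp hb).2
    have hxb : (ξ (x e)).1 ≠ (ξ b).1 := hb ▸ hxw
    rw [hCG1 _ _ fun h => hxb (by rw [h]), extWeight, if_neg fun h => hxb (congrArg Prod.fst h),
      if_neg hxb, hx, hb]
  calc ∑ z ∈ univ.filter (fun z => dmk (Hleft ξ) H_e z = q'), CG (z * x⁻¹)
      = ∑ z ∈ univ.filter (fun z : Equiv.Perm (Fin N) => (ξ (z e)).1 = w), CG (z * x⁻¹) :=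
        sum_congr (filter_congr fun z _ => dmk_Hleft_stabilizer_eq_iff ξ e z q') fun _ _ => rfl
    _ = ∑ b ∈ univ.filter fun b => (ξ b).1 = w, CG (Equiv.swap (x e) b) :=
        Equiv.Perm.sum_filter_apply_mul_inv_eq_sum_swap CG hCG0 (fun b => (ξ b).1 = w) x e hxw
    _ = k * r (blockOfDoubleCoset ξ e q) w := by
        rw [sum_congr rfl hterm, sum_const, card_filter_fst_eq, nsmul_eq_mul]

end DoubleCoset

theorem stmt_18_general {V : Type*} [Fintype V]
    (r : V → V → ℝ) (hrd : ∀ u, r u u = 0)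
    (k N : ℕ)
    (ξ : Fin N ≃ V × Fin k)
    -- the weight on the symmetric group `S_N` of the interchange process on `X̃`
    (CG : Equiv.Perm (Fin N) → ℝ)
    (hCG1 : ∀ i j : Fin N, i ≠ j →
      CG (Equiv.swap i j) = extWeight k r (ξ i) (ξ j))
    (hCG0 : ∀ g : Equiv.Perm (Fin N),
      (¬∃ i j : Fin N, i ≠ j ∧ g = Equiv.swap i j) → CG g = 0)
    -- the subgroup `H_{N-1}` of permutations fixing the last point
    (e : Fin N) :
    ∃ ψ : DQuot (Hleft ξ) (MulAction.stabilizer (Equiv.Perm (Fin N)) e) → V,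
      Function.Bijective ψ ∧
      (∀ q q', q ≠ q' →
        qC CG (Hleft ξ) (MulAction.stabilizer (Equiv.Perm (Fin N)) e) q q' =
          (k : ℝ) * r (ψ q) (ψ q')) ∧
      spectralGap (qC CG (Hleft ξ) (MulAction.stabilizer (Equiv.Perm (Fin N)) e)) =
        (k : ℝ) * spectralGap r := by
  have hweight := qC_Hleft_stabilizer_eq ξ e r hrd CG hCG1 hCG0
  have hbij := blockOfDoubleCoset_bijective ξ e
  have hk : (0 : ℝ) < k := Nat.cast_pos.mpr (ξ e).2.pos
  refine ⟨blockOfDoubleCoset ξ e, hbij, fun q q' _ => hweight q q', ?_⟩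
  rw [funext₂ hweight]
  exact spectralGap_comp_equiv r (Equiv.ofBijective _ hbij) hk

theorem stmt_18 {V : Type*} [Fintype V] [Nonempty V]
    (r : V → V → ℝ) (hrs : ∀ u w, r u w = r w u) (hrd : ∀ u, r u u = 0)
    (hrnn : ∀ u w, 0 ≤ r u w)
    (k N : ℕ) (hk : 1 ≤ k) (hN : N = k * Fintype.card V) (hNpos : 0 < N)
    (ξ : Fin N ≃ V × Fin k)
    -- the weight on the symmetric group `S_N` of the interchange process on `X̃`
    (CG : Equiv.Perm (Fin N) → ℝ)
    (hCG1 : ∀ i j : Fin N, i ≠ j →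
      CG (Equiv.swap i j) = extWeight k r (ξ i) (ξ j))
    (hCG0 : ∀ g : Equiv.Perm (Fin N),
      (¬∃ i j : Fin N, i ≠ j ∧ g = Equiv.swap i j) → CG g = 0)
    -- the subgroup `H_{N-1}` of permutations fixing the last point
    (e : Fin N) (he : e = ⟨N - 1, Nat.sub_lt hNpos one_pos⟩) :
    ∃ ψ : DQuot (Hleft ξ) (MulAction.stabilizer (Equiv.Perm (Fin N)) e) → V,
      Function.Bijective ψ ∧
      (∀ q q', q ≠ q' →
        qC CG (Hleft ξ) (MulAction.stabilizer (Equiv.Perm (Fin N)) e) q q' =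
          (k : ℝ) * r (ψ q) (ψ q')) ∧
      spectralGap (qC CG (Hleft ξ) (MulAction.stabilizer (Equiv.Perm (Fin N)) e)) =
        (k : ℝ) * spectralGap r :=
  stmt_18_general r hrd k N ξ CG hCG1 hCG0 e
end
end
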